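/- Let (α⁺, α⁻) be a contact pair on a 3-manifold M (α⁺ positive contact on M⁺, α⁻ negative contact on M⁻, M = M⁺ ∪ M⁻, and −dα⁻ = dα⁺ on M⁰ = M⁺ ∩ M⁻). Then α⁰ = α⁺ + α⁻ is a closed, nowhere-zero 1-form on M⁰, and α⁰(R_{α⁺}) > 1 and α⁰(R_{α⁻}) > 1, where R_{α^±} are the Reeb vector fields of α^±. -/

import Mathlib

noncomputable section

/-- ℝ³, the local model of a 3-manifold. -/
abbrev E3 : Type := Fin 3 → ℝ

/-- Pairing of a covector (given by its coefficients) with a vector. -/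
def dot3 (a v : E3) : ℝ := ∑ i, a i * v i

/-- The exterior derivative of a 1-form `a` (given by coefficient functions),
evaluated on a pair of (constant) vectors: dα(u,v) = ∂_u(α(v)) − ∂_v(α(u)). -/
noncomputable def oneD (a : E3 → E3) (x u v : E3) : ℝ :=
  fderiv ℝ (fun y => dot3 (a y) v) x u - fderiv ℝ (fun y => dot3 (a y) u) x v

/-- Standard basis vectors. -/
def e3 (i : Fin 3) : E3 := Pi.single i 1

/-- The coefficient of α ∧ dα against the standard volume dx⁰∧dx¹∧dx²;
a 1-form is positive contact iff this is everywhere positive. -/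
noncomputable def contactVol (a : E3 → E3) (x : E3) : ℝ :=
  dot3 (a x) (e3 0) * oneD a x (e3 1) (e3 2)
    - dot3 (a x) (e3 1) * oneD a x (e3 0) (e3 2)
    + dot3 (a x) (e3 2) * oneD a x (e3 0) (e3 1)

-- Auxiliary lemmas
lemma hasFDeriv_dot3 (a : E3 → E3) (x v : E3) (ha : DifferentiableAt ℝ a x) :
    HasFDerivAt (fun y => dot3 (a y) v)
      (∑ i, v i • fderiv ℝ (fun y => a y i) x) x := by
  have hi : ∀ i, DifferentiableAt ℝ (fun y => a y i) x := fun i =>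
    (differentiableAt_pi.mp ha) i
  have := HasFDerivAt.fun_sum (fun i (_ : i ∈ Finset.univ) =>
    ((hi i).hasFDerivAt.mul_const (v i)))
  simpa [dot3] using this

lemma dot3_e3 (a : E3) (i : Fin 3) : dot3 a (e3 i) = a i := by
  simp only [dot3, e3, Pi.single_apply, mul_ite, mul_one, mul_zero]
  rw [Finset.sum_ite_eq']
  simp

lemma dot3_add_left (a b v : E3) : dot3 (a + b) v = dot3 a v + dot3 b v := by
  simp [dot3, add_mul, Finset.sum_add_distrib]

lemma apply_eq_sum (L : E3 →L[ℝ] ℝ) (u : E3) : L u = ∑ j, u j * L (e3 j) := by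
  have hu : u = ∑ j, u j • e3 j := by
    funext k
    simp only [Finset.sum_apply, Pi.smul_apply, e3, Pi.single_apply, smul_eq_mul,
      mul_ite, mul_one, mul_zero]
    rw [Finset.sum_ite_eq]
    simp
  conv_lhs => rw [hu]
  simp [map_sum]

lemma fderiv_dot3_apply (a : E3 → E3) (x v u : E3) (ha : DifferentiableAt ℝ a x) :
    fderiv ℝ (fun y => dot3 (a y) v) x u
      = ∑ i, ∑ j, v i * u j * fderiv ℝ (fun y => a y i) x (e3 j) := by
  rw [(hasFDeriv_dot3 a x v ha).fderiv]
  rw [ContinuousLinearMap.sum_apply]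
  refine Finset.sum_congr rfl fun i _ => ?_
  rw [ContinuousLinearMap.smul_apply, smul_eq_mul,
    apply_eq_sum (fderiv ℝ (fun y => a y i) x) u, Finset.mul_sum]
  exact Finset.sum_congr rfl fun j _ => by ring

lemma oneD_sum (a : E3 → E3) (x : E3) (ha : DifferentiableAt ℝ a x) (u v : E3) :
    oneD a x u v = ∑ i, ∑ j,
      (v i * u j - u i * v j) * fderiv ℝ (fun y => a y i) x (e3 j) := by
  rw [oneD, fderiv_dot3_apply a x v u ha, fderiv_dot3_apply a x u v ha]
  simp only [Fin.sum_univ_three]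
  ring

lemma oneD_expand (a : E3 → E3) (x : E3) (ha : DifferentiableAt ℝ a x) (u v : E3) :
    oneD a x u v =
      (u 0 * v 1 - u 1 * v 0) * oneD a x (e3 0) (e3 1)
      + (u 0 * v 2 - u 2 * v 0) * oneD a x (e3 0) (e3 2)
      + (u 1 * v 2 - u 2 * v 1) * oneD a x (e3 1) (e3 2) := by
  rw [oneD_sum a x ha u v, oneD_sum a x ha (e3 0) (e3 1),
    oneD_sum a x ha (e3 0) (e3 2), oneD_sum a x ha (e3 1) (e3 2)]
  simp only [Fin.sum_univ_three, e3, Pi.single_apply,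
    show ((0:Fin 3) = 1) = False by simp [Fin.ext_iff],
    show ((0:Fin 3) = 2) = False by simp [Fin.ext_iff],
    show ((1:Fin 3) = 0) = False by simp [Fin.ext_iff],
    show ((1:Fin 3) = 2) = False by simp [Fin.ext_iff],
    show ((2:Fin 3) = 0) = False by simp [Fin.ext_iff],
    show ((2:Fin 3) = 1) = False by simp [Fin.ext_iff],
    if_true, if_false, eq_self_iff_true, mul_one, mul_zero, zero_mul, one_mul]
  ring

lemma oneD_add (a b : E3 → E3) (x : E3) (ha : DifferentiableAt ℝ a x)
    (hb : DifferentiableAt ℝ b x) (u v : E3) :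
    oneD (fun y => a y + b y) x u v = oneD a x u v + oneD b x u v := by
  have hD : ∀ w : E3, fderiv ℝ (fun y => dot3 (a y + b y) w) x
      = fderiv ℝ (fun y => dot3 (a y) w) x + fderiv ℝ (fun y => dot3 (b y) w) x := by
    intro w
    have h1 := hasFDeriv_dot3 a x w ha
    have h2 := hasFDeriv_dot3 b x w hb
    have h3 : HasFDerivAt (fun y => dot3 (a y + b y) w)
        (fderiv ℝ (fun y => dot3 (a y) w) x + fderiv ℝ (fun y => dot3 (b y) w) x) x := by
      rw [h1.fderiv, h2.fderiv]
      have := h1.fun_add h2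
      simpa [dot3_add_left] using this
    exact h3.fderiv
  simp only [oneD, hD, ContinuousLinearMap.add_apply]
  ring


/-- for a contact pair (α⁺,α⁻) on M (α⁺ positive contact on M⁺,
α⁻ negative contact on M⁻, M⁺ ∪ M⁻ = M, dα⁺ = −dα⁻ on M⁰ = M⁺ ∩ M⁻),
the 1-form α⁰ = α⁺ + α⁻ is closed and nowhere zero on M⁰, and
α⁰(R_{α⁺}) > 1, α⁰(R_{α⁻}) > 1 for the Reeb fields R_{α^±}. -/
theorem statement6 (Mp Mn : Set E3) (hMp : IsOpen Mp) (hMn : IsOpen Mn)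
    (hcover : Mp ∪ Mn = Set.univ)
    (ap an Rp Rn : E3 → E3)
    (hap : ContDiffOn ℝ (⊤ : ℕ∞) ap Mp) (han : ContDiffOn ℝ (⊤ : ℕ∞) an Mn)
    (hpos : ∀ x ∈ Mp, 0 < contactVol ap x)
    (hneg : ∀ x ∈ Mn, contactVol an x < 0)
    (hpair : ∀ x ∈ Mp ∩ Mn, ∀ u v : E3, oneD an x u v = -oneD ap x u v)
    (hRp : ∀ x ∈ Mp, dot3 (ap x) (Rp x) = 1 ∧ ∀ v : E3, oneD ap x (Rp x) v = 0)
    (hRn : ∀ x ∈ Mn, dot3 (an x) (Rn x) = 1 ∧ ∀ v : E3, oneD an x (Rn x) v = 0) :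
    ∀ x ∈ Mp ∩ Mn,
      (∀ u v : E3, oneD (fun y => ap y + an y) x u v = 0) ∧
      ap x + an x ≠ 0 ∧
      1 < dot3 (ap x + an x) (Rp x) ∧
      1 < dot3 (ap x + an x) (Rn x) := by
  intro x hx
  obtain ⟨hx1, hx2⟩ := hx
  have dap : DifferentiableAt ℝ ap x :=
    (hap.contDiffAt (hMp.mem_nhds hx1)).differentiableAt (by simp)
  have dan : DifferentiableAt ℝ an x :=
    (han.contDiffAt (hMn.mem_nhds hx2)).differentiableAt (by simp)
  have hclosed : ∀ u v : E3, oneD (fun y => ap y + an y) x u v = 0 := by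
    intro u v
    rw [oneD_add ap an x dap dan u v, hpair x ⟨hx1, hx2⟩ u v]
    ring
  -- abbreviations
  have hV : 0 < ap x 0 * oneD ap x (e3 1) (e3 2) - ap x 1 * oneD ap x (e3 0) (e3 2)
      + ap x 2 * oneD ap x (e3 0) (e3 1) := by
    have := hpos x hx1
    rw [contactVol] at this
    simpa [dot3_e3] using this
  have hW : 0 < an x 0 * oneD ap x (e3 1) (e3 2) - an x 1 * oneD ap x (e3 0) (e3 2)
      + an x 2 * oneD ap x (e3 0) (e3 1) := by
    have h := hneg x hx2
    rw [contactVol, hpair x ⟨hx1, hx2⟩ (e3 1) (e3 2), hpair x ⟨hx1, hx2⟩ (e3 0) (e3 2),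
      hpair x ⟨hx1, hx2⟩ (e3 0) (e3 1)] at h
    simp only [dot3_e3] at h
    nlinarith [h]
  have e3vals : (e3 0 0 = 1 ∧ e3 0 1 = 0 ∧ e3 0 2 = 0) ∧ (e3 1 0 = 0 ∧ e3 1 1 = 1 ∧ e3 1 2 = 0)
      ∧ (e3 2 0 = 0 ∧ e3 2 1 = 0 ∧ e3 2 2 = 1) := by
    refine ⟨⟨?_,?_,?_⟩,⟨?_,?_,?_⟩,⟨?_,?_,?_⟩⟩ <;> simp [e3, Pi.single_apply, Fin.ext_iff]
  obtain ⟨⟨he00, he01, he02⟩, ⟨he10, he11, he12⟩, ⟨he20, he21, he22⟩⟩ := e3vals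
  -- Reeb equations for Rp
  obtain ⟨hp1, hp2⟩ := hRp x hx1
  have Ep0 := hp2 (e3 0); have Ep1 := hp2 (e3 1); have Ep2 := hp2 (e3 2)
  rw [oneD_expand ap x dap (Rp x) (e3 0)] at Ep0
  rw [oneD_expand ap x dap (Rp x) (e3 1)] at Ep1
  rw [oneD_expand ap x dap (Rp x) (e3 2)] at Ep2
  rw [he00, he01, he02] at Ep0
  rw [he10, he11, he12] at Ep1
  rw [he20, he21, he22] at Ep2
  rw [dot3, Fin.sum_univ_three] at hp1
  have hkey : (an x 0 * oneD ap x (e3 1) (e3 2) - an x 1 * oneD ap x (e3 0) (e3 2)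
        + an x 2 * oneD ap x (e3 0) (e3 1))
      = (ap x 0 * oneD ap x (e3 1) (e3 2) - ap x 1 * oneD ap x (e3 0) (e3 2)
        + ap x 2 * oneD ap x (e3 0) (e3 1))
      * (an x 0 * Rp x 0 + an x 1 * Rp x 1 + an x 2 * Rp x 2) := by
    linear_combination (an x 1 * ap x 2 - an x 2 * ap x 1) * Ep0
      + (an x 2 * ap x 0 - an x 0 * ap x 2) * Ep1
      + (an x 0 * ap x 1 - an x 1 * ap x 0) * Ep2
      - (an x 0 * oneD ap x (e3 1) (e3 2) - an x 1 * oneD ap x (e3 0) (e3 2)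
        + an x 2 * oneD ap x (e3 0) (e3 1)) * hp1
  have htp : 0 < dot3 (an x) (Rp x) := by
    rw [dot3, Fin.sum_univ_three]
    nlinarith [hV, hW, hkey]
  have goal3 : 1 < dot3 (ap x + an x) (Rp x) := by
    rw [dot3_add_left]
    simp only [dot3, Fin.sum_univ_three] at htp ⊢
    linarith
  -- Reeb equations for Rn
  obtain ⟨hn1, hn2⟩ := hRn x hx2
  have En0' : oneD ap x (Rn x) (e3 0) = 0 := by
    have := hpair x ⟨hx1, hx2⟩ (Rn x) (e3 0); have h2 := hn2 (e3 0); linarith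
  have En1' : oneD ap x (Rn x) (e3 1) = 0 := by
    have := hpair x ⟨hx1, hx2⟩ (Rn x) (e3 1); have h2 := hn2 (e3 1); linarith
  have En2' : oneD ap x (Rn x) (e3 2) = 0 := by
    have := hpair x ⟨hx1, hx2⟩ (Rn x) (e3 2); have h2 := hn2 (e3 2); linarith
  rw [oneD_expand ap x dap (Rn x) (e3 0), he00, he01, he02] at En0'
  rw [oneD_expand ap x dap (Rn x) (e3 1), he10, he11, he12] at En1'
  rw [oneD_expand ap x dap (Rn x) (e3 2), he20, he21, he22] at En2'
  rw [dot3, Fin.sum_univ_three] at hn1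
  have hkey' : (ap x 0 * oneD ap x (e3 1) (e3 2) - ap x 1 * oneD ap x (e3 0) (e3 2)
        + ap x 2 * oneD ap x (e3 0) (e3 1))
      = (an x 0 * oneD ap x (e3 1) (e3 2) - an x 1 * oneD ap x (e3 0) (e3 2)
        + an x 2 * oneD ap x (e3 0) (e3 1))
      * (ap x 0 * Rn x 0 + ap x 1 * Rn x 1 + ap x 2 * Rn x 2) := by
    linear_combination (ap x 1 * an x 2 - ap x 2 * an x 1) * En0'
      + (ap x 2 * an x 0 - ap x 0 * an x 2) * En1'
      + (ap x 0 * an x 1 - ap x 1 * an x 0) * En2'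
      - (ap x 0 * oneD ap x (e3 1) (e3 2) - ap x 1 * oneD ap x (e3 0) (e3 2)
        + ap x 2 * oneD ap x (e3 0) (e3 1)) * hn1
  have goal4 : 1 < dot3 (ap x + an x) (Rn x) := by
    rw [dot3_add_left]
    have htn : 0 < dot3 (ap x) (Rn x) := by
      rw [dot3, Fin.sum_univ_three]
      nlinarith [hV, hW, hkey']
    simp only [dot3, Fin.sum_univ_three] at htn ⊢
    linarith
  refine ⟨hclosed, ?_, goal3, goal4⟩
  intro h
  rw [h] at goal3
  simp [dot3] at goal3
  linarith
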